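/- arXiv:2505.24177 — 5 statements merged into one kernel-verified Lean document; each statement's English description precedes it below -/
import Mathlib

section
/- Let A_o, A_r > 0, φ ∈ ℝ, δ ∈ ℝ with cos δ ≠ 1, and set E_{I,1} = A_o^2 + A_r^2 + 2A_oA_r cos φ, E_{I,2} = A_o^2 + A_r^2 + 2A_oA_r cos(φ - δ). Then b = A_o^2 + A_r^2 satisfies the quadratic equation u'b^2 + v'b + w' = 0, where u' = 2 - 2cos δ, v' = -2(1 - cos δ)(E_{I,1} + E_{I,2}) - 4A_r^2 sin^2 δ, and w' = E_{I,1}^2 + E_{I,2}^2 - 2E_{I,1}E_{I,2} cos δ + 4A_r^4 sin^2 δ. -/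
open Real

/-- b = A_o² + A_r² satisfies the hologram quadratic equation u'b² + v'b + w' = 0. -/
theorem stmt_1 (Ao Ar φ δ : ℝ) (hAo : 0 < Ao) (hAr : 0 < Ar)
    (hδ : Real.cos δ ≠ 1)
    (EI1 EI2 u' v' w' b : ℝ)
    (hEI1 : EI1 = Ao^2 + Ar^2 + 2 * Ao * Ar * Real.cos φ)
    (hEI2 : EI2 = Ao^2 + Ar^2 + 2 * Ao * Ar * Real.cos (φ - δ))
    (hu : u' = 2 - 2 * Real.cos δ)
    (hv : v' = -2 * (1 - Real.cos δ) * (EI1 + EI2) - 4 * Ar^2 * (Real.sin δ)^2)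
    (hw : w' = EI1^2 + EI2^2 - 2 * EI1 * EI2 * Real.cos δ + 4 * Ar^4 * (Real.sin δ)^2)
    (hb : b = Ao^2 + Ar^2) :
    u' * b^2 + v' * b + w' = 0 := by
  subst hEI1 hEI2 hu hv hw hb
  have h1 := Real.sin_sq_add_cos_sq δ
  have h2 := Real.sin_sq_add_cos_sq φ
  rw [Real.cos_sub]
  linear_combination (-4*Ao^2*Ar^2*(Real.cos φ)^2) * h1 + (4*Ao^2*Ar^2*(Real.sin δ)^2) * h2
end

section
/- Under the hypotheses of the hologram quadratic equation (u' = 2 - 2cos δ > 0, v', w' as defined from E_{I,1}, E_{I,2}, A_r, δ), the discriminant satisfies v'^2 - 4u'w' ≥ 0, so the quadratic u'b^2 + v'b + w' = 0 has a real solution. -/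
open Real

/-- The discriminant of the hologram quadratic is nonnegative, so a real solution exists. -/
theorem stmt_2 (Ao Ar φ δ : ℝ) (hAo : 0 < Ao) (hAr : 0 < Ar)
    (hδ : Real.cos δ ≠ 1)
    (EI1 EI2 u' v' w' : ℝ)
    (hEI1 : EI1 = Ao^2 + Ar^2 + 2 * Ao * Ar * Real.cos φ)
    (hEI2 : EI2 = Ao^2 + Ar^2 + 2 * Ao * Ar * Real.cos (φ - δ))
    (hu : u' = 2 - 2 * Real.cos δ)
    (hv : v' = -2 * (1 - Real.cos δ) * (EI1 + EI2) - 4 * Ar^2 * (Real.sin δ)^2)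
    (hw : w' = EI1^2 + EI2^2 - 2 * EI1 * EI2 * Real.cos δ + 4 * Ar^4 * (Real.sin δ)^2) :
    v'^2 - 4 * u' * w' ≥ 0 ∧ ∃ b : ℝ, u' * b^2 + v' * b + w' = 0 := by
  have hroot : u' * (Ao^2 + Ar^2)^2 + v' * (Ao^2 + Ar^2) + w' = 0 := by
    subst hEI1 hEI2 hu hv hw
    rw [Real.cos_sub]
    linear_combination (-4*Ao^2*Ar^2 + 4*Ao^2*Ar^2*(Real.cos φ)^2 - 4*Ao^2*Ar^2*((Real.cos φ)^2 - (Real.sin φ)^2)) *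
        (Real.sin_sq_add_cos_sq δ) +
      (4*Ao^2*Ar^2 - 4*Ao^2*Ar^2*(Real.cos δ)^2) * (Real.sin_sq_add_cos_sq φ)
  constructor
  · have : v'^2 - 4 * u' * w' = (2 * u' * (Ao^2 + Ar^2) + v')^2 := by
      linear_combination (-4 * u') * hroot
    rw [this]; positivity
  · exact ⟨Ao^2 + Ar^2, hroot⟩
end

section
/- Let E_o, E_r ∈ ℂ with |E_r| > |E_o|, δ ∈ ℝ with e^{jδ} ≠ 1, E_{I,1} = |E_r + E_o|^2, E_{I,2} = |e^{jδ}E_r + E_o|^2, Q = 2|sin(δ/2)| |E_r|, s_1 = (E_{I,1} - E_{I,2})/(2Q^2), and s_2 = √((E_{I,1}+E_{I,2})/(2Q^2) - (E_{I,1}-E_{I,2})^2/(4Q^4) - 1/4). Then, assuming the correct branch (i.e., the intersection closer to the origin), E_o = [(1 - e^{jδ})(s_1 - j s_2) - (e^{jδ}+1)/2] E_r. -/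
/-!
In the frame `u = (E_o / E_r + (e^{jδ} + 1) / 2) / (1 - e^{jδ})`, the two holograms become
`E_{I,1} = Q² |u + 1/2|²` and `E_{I,2} = Q² |u - 1/2|²` with `Q = |(1 - e^{jδ}) E_r|`, i.e. two circles
centred at `∓1/2`. Subtracting them gives `Re u = s₁`; adding them gives `|u|²`, hence `(Im u)² = s₂²`.
The branch condition `Im u ≤ 0` fixes the sign, so `u = s₁ - j s₂`, which is the claimed formula.
-/

open Complex Real

lemma norm_one_sub_exp_ofReal_mul_I (δ : ℝ) :
    ‖1 - exp (δ * I)‖ = 2 * |Real.sin (δ / 2)| := by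
  rw [norm_sub_rev, mul_comm, norm_exp_I_mul_ofReal_sub_one, norm_mul, Real.norm_eq_abs,
    Real.norm_eq_abs, abs_two]

lemma sq_norm_add_half (u : ℂ) : ‖u + 1 / 2‖ ^ 2 = (u.re + 1 / 2) ^ 2 + u.im ^ 2 := by
  rw [Complex.sq_norm, normSq_apply, add_re, add_im, div_ofNat_re, div_ofNat_im]; simp [sq]

lemma sq_norm_sub_half (u : ℂ) : ‖u - 1 / 2‖ ^ 2 = (u.re - 1 / 2) ^ 2 + u.im ^ 2 := by
  rw [Complex.sq_norm, normSq_apply, sub_re, sub_im, div_ofNat_re, div_ofNat_im]; simp [sq]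

lemma eq_of_scaled_dist_half {c u : ℂ} {q I₁ I₂ : ℝ} (hc : c ≠ 0) (hu : u.im ≤ 0) (hq : q = ‖c‖)
    (hI₁ : I₁ = ‖c * (u + 1 / 2)‖ ^ 2) (hI₂ : I₂ = ‖c * (u - 1 / 2)‖ ^ 2) :
    u = (((I₁ - I₂) / (2 * q ^ 2) : ℝ) : ℂ) -
      ((√((I₁ + I₂) / (2 * q ^ 2) - (I₁ - I₂) ^ 2 / (4 * q ^ 4) - 1 / 4) : ℝ) : ℂ) * I := by
  have hq' : q ≠ 0 := hq ▸ norm_ne_zero_iff.mpr hc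
  rw [norm_mul, mul_pow, ← hq, sq_norm_add_half] at hI₁
  rw [norm_mul, mul_pow, ← hq, sq_norm_sub_half] at hI₂
  have hre : (I₁ - I₂) / (2 * q ^ 2) = u.re := by
    rw [hI₁, hI₂]; field_simp; ring
  have him : (I₁ + I₂) / (2 * q ^ 2) - (I₁ - I₂) ^ 2 / (4 * q ^ 4) - 1 / 4 = u.im ^ 2 := by
    rw [hI₁, hI₂]; field_simp; ring
  rw [hre, him, Real.sqrt_sq_eq_abs, abs_of_nonpos hu, ofReal_neg, neg_mul, sub_neg_eq_add,
    re_add_im]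

/-- Geometric recovery of the object wave from two holograms (intersection of two circles,
    branch closer to the origin encoded by the sign of the imaginary part in the rotated frame). -/
theorem stmt_3 (Eo Er : ℂ) (δ : ℝ)
    (hmod : ‖Er‖ > ‖Eo‖)
    (hδ : Complex.exp (δ * Complex.I) ≠ 1)
    (EI1 EI2 Q s1 s2 : ℝ)
    (hEI1 : EI1 = (‖Er + Eo‖)^2)
    (hEI2 : EI2 = (‖Complex.exp (δ * Complex.I) * Er + Eo‖)^2)
    (hQ : Q = 2 * |Real.sin (δ / 2)| * ‖Er‖)
    (hs1 : s1 = (EI1 - EI2) / (2 * Q^2))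
    (hs2 : s2 = Real.sqrt ((EI1 + EI2) / (2 * Q^2) - (EI1 - EI2)^2 / (4 * Q^4) - 1/4))
    (hbranch :
      ((Eo / Er + (Complex.exp (δ * Complex.I) + 1) / 2) /
        (1 - Complex.exp (δ * Complex.I))).im ≤ 0) :
    Eo = ((1 - Complex.exp (δ * Complex.I)) * ((s1 : ℂ) - (s2 : ℂ) * Complex.I) -
          (Complex.exp (δ * Complex.I) + 1) / 2) * Er := by
  set w := exp (δ * I)
  set u := (Eo / Er + (w + 1) / 2) / (1 - w)
  have hEr : Er ≠ 0 := norm_pos_iff.mp (lt_of_le_of_lt (norm_nonneg Eo) hmod)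
  have h1w : 1 - w ≠ 0 := sub_ne_zero.mpr hδ.symm
  have hEo : Eo = ((1 - w) * u - (w + 1) / 2) * Er := by
    simp only [u]; field_simp; ring
  have hEI1' : EI1 = ‖((1 - w) * Er) * (u + 1 / 2)‖ ^ 2 := by
    rw [hEI1, hEo]; congr 2; ring
  have hEI2' : EI2 = ‖((1 - w) * Er) * (u - 1 / 2)‖ ^ 2 := by
    rw [hEI2, hEo]; congr 2; ring
  have hQ' : Q = ‖(1 - w) * Er‖ := by
    rw [hQ, norm_mul, norm_one_sub_exp_ofReal_mul_I]
  rw [hs1, hs2, ← eq_of_scaled_dist_half (mul_ne_zero h1w hEr) hbranch hQ' hEI1' hEI2']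
  exact hEo
end

section
/- Let X have density f(x) = (1/σ^2) exp(-(x + μ^2)/σ^2) I_0(2√x μ/σ^2) on x ≥ 0 with μ, σ > 0. Then E[√X] = (√π σ/2) exp(-μ^2/(2σ^2)) [(1 + μ^2/σ^2) I_0(μ^2/(2σ^2)) + (μ^2/σ^2) I_1(μ^2/(2σ^2))]. -/
/-!
Substituting `x = t²` turns `E[√X]` into `(2/σ²) ∫₀^∞ t² e^{-(t²+μ²)/σ²} I₀(2tμ/σ²) dt`, and
since `I₀` is even this is `1/σ²` times the same integral over the whole line. Inserting the
integral representation of `I₀` and swapping the integrals, the inner `t`-integral is, after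
completing the square, a shifted Gaussian second moment,
`√π σ e^{-(μ²/σ²) sin²θ} (σ²/2 + μ² cos²θ)`. Expressed through `cos 2θ` and substituting
`φ = 2θ`, the `θ`-integral becomes that of `e^{z cos φ} (A + B cos φ)` over `[0, π]` with
`z = μ²/(2σ²)`, i.e. `π (A I₀(z) + B I₁(z))`.
-/

open Real MeasureTheory

/-- Modified Bessel function of the first kind of order 0 (integral representation). -/
noncomputable def besselI0 (z : ℝ) : ℝ :=
  (1 / Real.pi) * ∫ θ in (0:ℝ)..Real.pi, Real.exp (z * Real.cos θ)

/-- Modified Bessel function of the first kind of order 1 (integral representation). -/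
noncomputable def besselI1 (z : ℝ) : ℝ :=
  (1 / Real.pi) * ∫ θ in (0:ℝ)..Real.pi, Real.exp (z * Real.cos θ) * Real.cos θ

open Set ProbabilityTheory

lemma besselI0_neg (z : ℝ) : besselI0 (-z) = besselI0 z := by
  have h := intervalIntegral.integral_comp_sub_left (fun θ => exp (z * cos θ)) π
    (a := 0) (b := π)
  simp only [sub_zero, sub_self, cos_pi_sub, mul_neg] at h
  rw [besselI0, besselI0, ← h]
  simp only [neg_mul]

lemma integral_exp_mul_cos_mul_affine (z A B : ℝ) :
    ∫ θ in (0:ℝ)..π, exp (z * cos θ) * (A + B * cos θ)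
      = π * (A * besselI0 z + B * besselI1 z) := by
  have hI0 : IntervalIntegrable (fun θ => exp (z * cos θ)) volume 0 π :=
    (by fun_prop : Continuous _).intervalIntegrable _ _
  have hI1 : IntervalIntegrable (fun θ => exp (z * cos θ) * cos θ) volume 0 π :=
    (by fun_prop : Continuous _).intervalIntegrable _ _
  have hsplit : (fun θ => exp (z * cos θ) * (A + B * cos θ))
      = fun θ => A * exp (z * cos θ) + B * (exp (z * cos θ) * cos θ) := by
    funext θ; ring
  rw [hsplit, intervalIntegral.integral_add (hI0.const_mul A) (hI1.const_mul B),
    intervalIntegral.integral_const_mul, intervalIntegral.integral_const_mul, besselI0, besselI1]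
  field_simp

lemma integral_comp_cos_two_mul {h : ℝ → ℝ} (hh : Continuous h) :
    ∫ θ in (0:ℝ)..π, h (cos (2 * θ)) = ∫ θ in (0:ℝ)..π, h (cos θ) := by
  have hc : Continuous (fun φ => h (cos φ)) := by fun_prop
  have hsym : ∫ φ in π..(2 * π), h (cos φ) = ∫ φ in (0:ℝ)..π, h (cos φ) := by
    have := intervalIntegral.integral_comp_sub_left (fun φ => h (cos φ)) (2 * π)
      (a := 0) (b := π)
    simp only [cos_two_pi_sub, sub_zero, show 2 * π - π = π by ring] at this
    exact this.symm
  rw [intervalIntegral.integral_comp_mul_left (fun φ => h (cos φ)) two_ne_zero, mul_zero,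
    ← intervalIntegral.integral_add_adjacent_intervals (b := π)
      (hc.intervalIntegrable _ _) (hc.intervalIntegrable _ _), hsym]
  simp only [smul_eq_mul]
  ring

lemma integral_sq_mul_exp_neg_sq_sub_div (m : ℝ) {v : ℝ} (hv : 0 < v) :
    ∫ t, t ^ 2 * exp (-(t - m) ^ 2 / (2 * v)) = √(2 * π * v) * (v + m ^ 2) := by
  have hv' : v.toNNReal ≠ 0 := by simpa using hv
  have hvv : (v.toNNReal : ℝ) = v := Real.coe_toNNReal _ hv.le
  have hmoment : ∫ t, t ^ 2 ∂gaussianReal m v.toNNReal = v + m ^ 2 := by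
    have := variance_eq_sub (memLp_id_gaussianReal (μ := m) (v := v.toNNReal) 2)
    simp only [variance_id_gaussianReal, Pi.pow_apply, id_eq, integral_id_gaussianReal,
      hvv] at this
    linarith
  rw [integral_gaussianReal_eq_integral_smul hv'] at hmoment
  simp only [gaussianPDFReal, hvv, smul_eq_mul, mul_assoc] at hmoment
  rw [integral_const_mul] at hmoment
  have hpos : 0 < √(2 * π * v) := by positivity
  rw [← hmoment]
  field_simp

lemma integrable_sq_mul_exp_neg_sq_sub_div (m : ℝ) {v : ℝ} (hv : 0 < v) :
    Integrable (fun t => t ^ 2 * exp (-(t - m) ^ 2 / (2 * v))) := by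
  -- a non-integrable function would have integral `0`, but this moment is positive
  by_contra h
  have := integral_sq_mul_exp_neg_sq_sub_div m hv
  rw [integral_undef h] at this
  have : 0 < √(2 * π * v) * (v + m ^ 2) := by positivity
  linarith

lemma exp_mul_le_exp_add_exp_neg (c : ℝ) {x : ℝ} (hx : |x| ≤ 1) :
    exp (c * x) ≤ exp c + exp (-c) := by
  have hcx : c * x ≤ |c| :=
    (le_abs_self _).trans (by rw [abs_mul]; exact mul_le_of_le_one_right (abs_nonneg c) hx)
  exact (exp_le_exp.2 hcx).trans (exp_abs_le c)

noncomputable def riceIntegrand (μ σ θ t : ℝ) : ℝ :=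
  t ^ 2 * exp (-(t ^ 2 + μ ^ 2) / σ ^ 2 + 2 * t * μ / σ ^ 2 * cos θ)

section

variable {μ σ : ℝ}

lemma riceIntegrand_eq_mul_shifted_gaussian (hσ : 0 < σ) (θ t : ℝ) :
    riceIntegrand μ σ θ t
      = exp (-(μ ^ 2 / (2 * σ ^ 2))) * exp (μ ^ 2 / (2 * σ ^ 2) * cos (2 * θ))
        * (t ^ 2 * exp (-(t - μ * cos θ) ^ 2 / (2 * (σ ^ 2 / 2)))) := by
  rw [riceIntegrand, ← exp_add, mul_left_comm, ← exp_add, cos_two_mul]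
  congr 2
  field_simp
  ring

lemma integral_riceIntegrand (hσ : 0 < σ) (θ : ℝ) :
    ∫ t, riceIntegrand μ σ θ t = √π * σ * exp (-(μ ^ 2 / (2 * σ ^ 2)))
      * (exp (μ ^ 2 / (2 * σ ^ 2) * cos (2 * θ))
        * ((σ ^ 2 + μ ^ 2) / 2 + μ ^ 2 / 2 * cos (2 * θ))) := by
  simp_rw [riceIntegrand_eq_mul_shifted_gaussian hσ θ]
  rw [integral_const_mul, integral_sq_mul_exp_neg_sq_sub_div _ (by positivity),
    show 2 * π * (σ ^ 2 / 2) = π * σ ^ 2 by ring, sqrt_mul pi_pos.le, sqrt_sq hσ.le,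
    cos_two_mul]
  ring

lemma intervalIntegral_riceIntegrand (σ t : ℝ) :
    ∫ θ in (0:ℝ)..π, riceIntegrand μ σ θ t
      = π * (t ^ 2 * exp (-(t ^ 2 + μ ^ 2) / σ ^ 2) * besselI0 (2 * t * μ / σ ^ 2)) := by
  simp_rw [riceIntegrand, exp_add, ← mul_assoc]
  rw [intervalIntegral.integral_const_mul, besselI0]
  field_simp

lemma integrable_riceIntegrand (hσ : 0 < σ) :
    Integrable (Function.uncurry (riceIntegrand μ σ))
      ((volume.restrict (Ioc 0 π)).prod volume) := by
  have hv : 0 < σ ^ 2 / 2 := by positivity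
  have hbound := ((integrable_sq_mul_exp_neg_sq_sub_div μ hv).add
    (integrable_sq_mul_exp_neg_sq_sub_div (-μ) hv)).comp_snd (volume.restrict (Ioc 0 π))
  have hcont : Continuous (Function.uncurry (riceIntegrand μ σ)) := by
    unfold riceIntegrand; fun_prop
  refine hbound.mono' hcont.aestronglyMeasurable
    (Filter.Eventually.of_forall fun ⟨θ, t⟩ => ?_)
  have hexp := exp_mul_le_exp_add_exp_neg (2 * t * μ / σ ^ 2) (abs_cos_le_one θ)
  simp only [Function.uncurry_apply_pair, riceIntegrand, exp_add, mul_comm _ (cos θ)] at hexp ⊢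
  rw [Real.norm_of_nonneg (by positivity)]
  have hminus : -(t - μ) ^ 2 / (2 * (σ ^ 2 / 2))
      = -(t ^ 2 + μ ^ 2) / σ ^ 2 + 2 * t * μ / σ ^ 2 := by
    field_simp; ring
  have hplus : -(t - -μ) ^ 2 / (2 * (σ ^ 2 / 2))
      = -(t ^ 2 + μ ^ 2) / σ ^ 2 + -(2 * t * μ / σ ^ 2) := by
    field_simp; ring
  simp only [Pi.add_apply, hminus, hplus, exp_add]
  have := mul_le_mul_of_nonneg_left hexp
    (by positivity : 0 ≤ t ^ 2 * exp (-(t ^ 2 + μ ^ 2) / σ ^ 2))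
  linarith

lemma integral_sq_mul_exp_mul_besselI0 (hσ : 0 < σ) :
    ∫ t, t ^ 2 * exp (-(t ^ 2 + μ ^ 2) / σ ^ 2) * besselI0 (2 * t * μ / σ ^ 2)
      = √π * σ * exp (-(μ ^ 2 / (2 * σ ^ 2)))
        * ((σ ^ 2 + μ ^ 2) / 2 * besselI0 (μ ^ 2 / (2 * σ ^ 2))
          + μ ^ 2 / 2 * besselI1 (μ ^ 2 / (2 * σ ^ 2))) := by
  have hint : Integrable (Function.uncurry (riceIntegrand μ σ))
      ((volume.restrict (uIoc 0 π)).prod volume) := by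
    simpa [uIoc_of_le pi_pos.le] using integrable_riceIntegrand hσ
  set z := μ ^ 2 / (2 * σ ^ 2) with hz
  have hdouble := integral_comp_cos_two_mul
    (h := fun y => exp (z * y) * ((σ ^ 2 + μ ^ 2) / 2 + μ ^ 2 / 2 * y)) (by fun_prop)
  have hπ := pi_pos
  calc _ = π⁻¹ * ∫ t, ∫ θ in (0:ℝ)..π, riceIntegrand μ σ θ t := by
        simp only [intervalIntegral_riceIntegrand, integral_const_mul,
          inv_mul_cancel_left₀ hπ.ne']
    _ = π⁻¹ * ∫ θ in (0:ℝ)..π, ∫ t, riceIntegrand μ σ θ t := by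
        rw [intervalIntegral_integral_swap hint]
    _ = π⁻¹ * (√π * σ * exp (-z)) *
          ∫ θ in (0:ℝ)..π, exp (z * cos θ) * ((σ ^ 2 + μ ^ 2) / 2 + μ ^ 2 / 2 * cos θ) := by
        simp only [integral_riceIntegrand hσ, ← hz, intervalIntegral.integral_const_mul, hdouble]
        ring
    _ = _ := by
        rw [integral_exp_mul_cos_mul_affine]
        field_simp

end

theorem stmt_11_general (μ σ : ℝ) (hσ : 0 < σ) :
    (∫ x in Set.Ioi (0:ℝ),
      Real.sqrt x *
        ((1 / σ^2) * Real.exp (-(x + μ^2) / σ^2) * besselI0 (2 * Real.sqrt x * μ / σ^2)))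
    = (Real.sqrt Real.pi * σ / 2) * Real.exp (-μ^2 / (2 * σ^2)) *
        ((1 + μ^2 / σ^2) * besselI0 (μ^2 / (2 * σ^2)) +
          (μ^2 / σ^2) * besselI1 (μ^2 / (2 * σ^2))) := by
  set q : ℝ → ℝ := fun t =>
    t ^ 2 * exp (-(t ^ 2 + μ ^ 2) / σ ^ 2) * besselI0 (2 * t * μ / σ ^ 2)
  have hsubst : (∫ x in Ioi (0:ℝ), √x * (1 / σ ^ 2 * exp (-(x + μ ^ 2) / σ ^ 2)
      * besselI0 (2 * √x * μ / σ ^ 2))) = 2 / σ ^ 2 * ∫ t in Ioi (0:ℝ), q t := by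
    rw [← integral_comp_rpow_Ioi _ two_ne_zero, ← integral_const_mul]
    refine setIntegral_congr_fun measurableSet_Ioi fun t ht => ?_
    simp only [smul_eq_mul, rpow_two, abs_two, show (2:ℝ) - 1 = 1 by norm_num, rpow_one,
      sqrt_sq (le_of_lt ht), q]
    ring
  have heven : ∫ t, q t = 2 * ∫ t in Ioi (0:ℝ), q t := by
    rw [← integral_comp_abs]
    congr 1; funext t
    rcases abs_cases t with ⟨h, -⟩ | ⟨h, -⟩ <;>
      simp only [h, q, neg_sq, neg_mul, mul_neg, neg_div, besselI0_neg]
  rw [hsubst, show 2 / σ ^ 2 * ∫ t in Ioi (0:ℝ), q t = 1 / σ ^ 2 * ∫ t, q t by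
    rw [heven]; ring, integral_sq_mul_exp_mul_besselI0 hσ]
  field_simp

/-- The mean of the square root of a noncentral chi-squared random variable. -/
theorem stmt_11 (μ σ : ℝ) (hμ : 0 < μ) (hσ : 0 < σ) :
    (∫ x in Set.Ioi (0:ℝ),
      Real.sqrt x *
        ((1 / σ^2) * Real.exp (-(x + μ^2) / σ^2) * besselI0 (2 * Real.sqrt x * μ / σ^2)))
    = (Real.sqrt Real.pi * σ / 2) * Real.exp (-μ^2 / (2 * σ^2)) *
        ((1 + μ^2 / σ^2) * besselI0 (μ^2 / (2 * σ^2)) +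
          (μ^2 / σ^2) * besselI1 (μ^2 / (2 * σ^2))) :=
  stmt_11_general μ σ hσ
end

section
/- For μ, σ > 0, ∫_0^∞ (1/σ^2) exp(-(x + μ^2)/σ^2) I_1(2√x μ/σ^2) (√x/μ) dx = 1, i.e., E[(√X/μ) R(2√X μ/σ^2) I_0(2√X μ/σ^2)/I_0(2√X μ/σ^2)] computed against the noncentral chi-squared density equals 1. -/
/-!
Expanding `exp (z cos θ)` in its power series and using `∫₀^π cos^(2k) = π (2k)! / (4^k (k!)²)`
gives `I₁(z) = ∑ (z/2)^(2k+1) / (k! (k+1)!)`. With this series the integrand becomes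
`∑ₖ Poisson(μ²/σ²)(k) · Gamma(k + 2, 1/σ²)(x)`, the classical description of the noncentral
χ² law as a Poisson mixture of Gamma laws. Each Gamma density integrates to `1` over `(0, ∞)`
and the Poisson weights sum to `1`.
-/

open Real MeasureTheory

open Nat Set ProbabilityTheory

lemma integral_cos_pow_odd (k : ℕ) : ∫ θ in 0..π, cos θ ^ (2 * k + 1) = 0 := by
  induction k with
  | zero => simp
  | succ k ih => rw [show 2 * (k + 1) + 1 = 2 * k + 1 + 2 by ring, integral_cos_pow]; simp [ih]

lemma integral_cos_pow_even (k : ℕ) :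
    ∫ θ in 0..π, cos θ ^ (2 * k) = π * (2 * k)! / (4 ^ k * (k ! : ℝ) ^ 2) := by
  induction k with
  | zero => simp
  | succ k ih =>
    rw [show 2 * (k + 1) = 2 * k + 2 by ring, integral_cos_pow, ih, factorial_succ,
      factorial_succ, factorial_succ]
    simp only [sin_zero, sin_pi, mul_zero, sub_zero, zero_div, zero_add]
    push_cast
    field_simp
    ring

lemma hasSum_integral_exp_mul_cos_mul_cos (z : ℝ) :
    HasSum (fun n : ℕ => z ^ n / n ! * ∫ θ in 0..π, cos θ ^ (n + 1))
      (∫ θ in 0..π, exp (z * cos θ) * cos θ) := by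
  simp_rw [← intervalIntegral.integral_const_mul]
  refine intervalIntegral.hasSum_integral_of_dominated_convergence (fun n _ => |z| ^ n / n !)
    (fun n => Continuous.aestronglyMeasurable (by fun_prop)) (fun n => ae_of_all _ fun θ _ => ?_)
    (ae_of_all _ fun _ _ => Real.summable_pow_div_factorial |z|) intervalIntegrable_const
    (ae_of_all _ fun θ _ => ?_)
  · rw [norm_mul, norm_div, norm_pow, norm_pow, Real.norm_eq_abs, Real.norm_natCast]
    exact mul_le_of_le_one_right (by positivity) (pow_le_one₀ (abs_nonneg _) (abs_cos_le_one θ))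
  · have h : HasSum (fun n : ℕ => (z * cos θ) ^ n / n !) (exp (z * cos θ)) := by
      rw [Real.exp_eq_exp_ℝ]; exact NormedSpace.expSeries_div_hasSum_exp _
    have e : (fun n : ℕ => z ^ n / n ! * cos θ ^ (n + 1)) =
        fun n => (z * cos θ) ^ n / n ! * cos θ := funext fun n => by ring
    exact e ▸ h.mul_right (cos θ)

lemma hasSum_besselI1 (z : ℝ) :
    HasSum (fun k : ℕ => (z / 2) ^ (2 * k + 1) / (k ! * (k + 1)! : ℝ)) (besselI1 z) := by
  have hodd : ∀ n ∉ range (fun k : ℕ => 2 * k + 1),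
      z ^ n / n ! * ∫ θ in 0..π, cos θ ^ (n + 1) = 0 := by
    intro n hn
    obtain ⟨k, rfl | rfl⟩ := n.even_or_odd'
    · rw [integral_cos_pow_odd, mul_zero]
    · exact absurd ⟨k, rfl⟩ hn
  have hinj : Function.Injective (fun k : ℕ => 2 * k + 1) := fun a b h => by simp_all
  have h := ((hinj.hasSum_iff hodd).2 (hasSum_integral_exp_mul_cos_mul_cos z)).mul_left (1 / π)
  have e : (fun k : ℕ => (z / 2) ^ (2 * k + 1) / (k ! * (k + 1)! : ℝ)) =
      fun k => 1 / π * (z ^ (2 * k + 1) / (2 * k + 1)! * ∫ θ in 0..π, cos θ ^ (2 * (k + 1))) := by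
    funext k
    rw [integral_cos_pow_even, show 2 * (k + 1) = 2 * k + 1 + 1 by ring,
      factorial_succ (2 * k + 1), factorial_succ k, div_pow, pow_succ 2, pow_mul]
    push_cast
    field_simp
    ring
  rw [e]
  exact h

lemma gammaPDFReal_natCast_add_one (n : ℕ) (r : ℝ) {x : ℝ} (hx : 0 ≤ x) :
    gammaPDFReal (n + 1) r x = r ^ (n + 1) / n ! * x ^ n * exp (-(r * x)) := by
  rw [gammaPDFReal, if_pos hx, add_sub_cancel_right, Gamma_nat_eq_factorial, rpow_natCast,
    ← Nat.cast_succ, rpow_natCast]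

lemma setIntegral_gammaPDFReal_Ioi {a r : ℝ} (ha : 0 < a) (hr : 0 < r) :
    ∫ x in Ioi 0, gammaPDFReal a r x = 1 := by
  rw [setIntegral_congr_fun measurableSet_Ioi fun x (hx : 0 < x) => by
      rw [gammaPDFReal, if_pos hx.le, mul_assoc],
    MeasureTheory.integral_const_mul, integral_rpow_mul_exp_neg_mul_Ioi ha hr,
    div_rpow zero_le_one hr.le, one_rpow]
  have := (Gamma_pos_of_pos ha).ne'
  have := (rpow_pos_of_pos hr a).ne'
  field_simp

lemma integral_tsum_mul_eq_of_integral_eq_one {α ι : Type*} [MeasurableSpace α] [Countable ι]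
    {μ : Measure α} {p : ι → ℝ} {s : ℝ} {f : ι → α → ℝ} (hp : ∀ i, 0 ≤ p i) (hps : HasSum p s)
    (hf : ∀ i, 0 ≤ᵐ[μ] f i) (hf1 : ∀ i, ∫ a, f i a ∂μ = 1) :
    ∫ a, ∑' i, p i * f i a ∂μ = s := by
  have hfi (i : ι) : Integrable (f i) μ := .of_integral_ne_zero (by simp [hf1 i])
  have hpf (i : ι) : ∫ a, p i * f i a ∂μ = p i := by
    rw [MeasureTheory.integral_const_mul, hf1, mul_one]
  have hnorm (i : ι) : ∫ a, ‖p i * f i a‖ ∂μ = p i := by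
    refine (integral_congr_ae ?_).trans (hpf i)
    filter_upwards [hf i] with a ha
    exact Real.norm_of_nonneg (mul_nonneg (hp i) ha)
  have h := hasSum_integral_of_summable_integral_norm (fun i => (hfi i).const_mul (p i))
    (by simpa only [hnorm] using hps.summable)
  simp only [hpf] at h
  exact h.unique hps

lemma hasSum_poisson_mul_gammaPDFReal {μ c x : ℝ} (hμ : μ ≠ 0) (hc : 0 < c) (hx : 0 ≤ x) :
    HasSum (fun k : ℕ => exp (-(μ ^ 2 / c)) * (μ ^ 2 / c) ^ k / k ! *
        gammaPDFReal ((k + 1 : ℕ) + 1) (1 / c) x)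
      ((1 / c) * exp (-(x + μ ^ 2) / c) * besselI1 (2 * √x * μ / c) * (√x / μ)) := by
  have h := ((hasSum_besselI1 (2 * √x * μ / c)).mul_left
    ((1 / c) * exp (-(x + μ ^ 2) / c))).mul_right (√x / μ)
  obtain ⟨s, hs, rfl⟩ : ∃ s, 0 ≤ s ∧ x = s ^ 2 := ⟨√x, sqrt_nonneg x, (sq_sqrt hx).symm⟩
  have e : (fun k : ℕ => exp (-(μ ^ 2 / c)) * (μ ^ 2 / c) ^ k / k ! *
        gammaPDFReal ((k + 1 : ℕ) + 1) (1 / c) (s ^ 2)) = fun k =>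
      (1 / c) * exp (-(s ^ 2 + μ ^ 2) / c) *
        ((2 * √(s ^ 2) * μ / c / 2) ^ (2 * k + 1) / (k ! * (k + 1)! : ℝ)) * (√(s ^ 2) / μ) := by
    funext k
    rw [gammaPDFReal_natCast_add_one _ _ (sq_nonneg s), sqrt_sq hs,
      show -(s ^ 2 + μ ^ 2) / c = -(μ ^ 2 / c) + -(1 / c * s ^ 2) by ring, exp_add]
    have := hc.ne'
    simp only [div_pow, mul_pow]
    field_simp
    ring
  rw [e]
  exact h

/-- E[√X · I₁(2√X μ/σ²)/I₀(2√X μ/σ²)] = μ for X noncentral chi-squared; equivalently,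
    ∫₀^∞ (1/σ²) e^{-(x+μ²)/σ²} I₁(2√x μ/σ²)(√x/μ) dx = 1. -/
theorem stmt_13 (μ σ : ℝ) (hμ : 0 < μ) (hσ : 0 < σ) :
    (∫ x in Set.Ioi (0:ℝ),
      (1 / σ^2) * Real.exp (-(x + μ^2) / σ^2) * besselI1 (2 * Real.sqrt x * μ / σ^2) *
        (Real.sqrt x / μ))
    = 1 := by
  have hc : 0 < σ ^ 2 := by positivity
  rw [setIntegral_congr_fun measurableSet_Ioi fun x (hx : 0 < x) =>
    (hasSum_poisson_mul_gammaPDFReal hμ.ne' hc hx.le).tsum_eq.symm]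
  exact integral_tsum_mul_eq_of_integral_eq_one (fun k => by positivity)
    (hasSum_one_poissonMeasure ⟨μ ^ 2 / σ ^ 2, by positivity⟩)
    (fun k => ae_of_all _ (gammaPDFReal_nonneg (by positivity) (by positivity)))
    (fun k => setIntegral_gammaPDFReal_Ioi (by positivity) (by positivity))
end
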